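/- Consider the sequential protocol with n+1 configurations 0,1,...,n where all r rooms start in configuration 0 and prisoner i (for 1 ≤ i ≤ n) only ever reconfigures rooms from configuration i-1 to configuration i, doing so exactly r times. Then at any point of any execution, a room is in configuration i only if it has been visited by each of prisoners 1, 2, ..., i; in particular, if prisoner n has performed his flip (n-1)→n r times, then every prisoner has visited every room. -/
import Mathlib


/-- State of the sequential protocol with configurations `0, 1, ..., n`:
room configurations and each prisoner's flip count. -/
structure SeqState (n r : ℕ) where
  rooms : Fin r → Fin (n + 1)
  cnt : Fin n → ℕ

/-- One visit: prisoner `i` (0-indexed; he plays the role of prisoner `i+1`)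
reconfigures a room from configuration `i` to configuration `i+1`, doing so at
most `r` times, and otherwise does nothing. -/
def seqStep {n r : ℕ} (v : Fin n × Fin r) (s : SeqState n r) : SeqState n r :=
  if s.rooms v.2 = Fin.castSucc v.1 ∧ s.cnt v.1 < r then
    { rooms := Function.update s.rooms v.2 (Fin.succ v.1)
      cnt := Function.update s.cnt v.1 (s.cnt v.1 + 1) }
  else s

/-- The state after `t` visits; all rooms start in configuration `0`. -/
def seqRun {n r : ℕ} (sch : ℕ → Fin n × Fin r) : ℕ → SeqState n r
  | 0 => ⟨fun _ => 0, fun _ => 0⟩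
  | t + 1 => seqStep (sch t) (seqRun sch t)

lemma seq_part1 {n r : ℕ} (sch : ℕ → Fin n × Fin r) :
    ∀ (t : ℕ) (rm : Fin r) (i : Fin n),
      (i : ℕ) + 1 ≤ (((seqRun sch t).rooms rm : ℕ)) →
      ∃ t' < t, sch t' = (i, rm) := by
  intro t
  induction t with
  | zero => intro rm i h; simp [seqRun] at h
  | succ t ih =>
    intro rm i h
    have hstep : seqRun sch (t+1) = seqStep (sch t) (seqRun sch t) := rfl
    rw [hstep] at h
    unfold seqStep at h
    split at h
    · rename_i hc
      by_cases hrm : rm = (sch t).2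
      · subst hrm
        dsimp only at h; simp only [Function.update_self, Fin.val_succ] at h
        rcases Nat.lt_or_ge (i : ℕ) (((sch t).1 : ℕ)) with hlt | hge
        · have hold : (i : ℕ) + 1 ≤ (((seqRun sch t).rooms (sch t).2 : ℕ)) := by
            rw [hc.1]; simpa using hlt
          obtain ⟨t', ht', he⟩ := ih (sch t).2 i hold
          exact ⟨t', Nat.lt_succ_of_lt ht', he⟩
        · have hi : i = (sch t).1 := Fin.ext (le_antisymm (by omega) hge)
          exact ⟨t, Nat.lt_succ_self t, by rw [hi]⟩
      · dsimp only at h; rw [Function.update_of_ne hrm] at h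
        obtain ⟨t', ht', he⟩ := ih rm i h
        exact ⟨t', Nat.lt_succ_of_lt ht', he⟩
    · obtain ⟨t', ht', he⟩ := ih rm i h
      exact ⟨t', Nat.lt_succ_of_lt ht', he⟩

lemma seq_cnt_eq {n r : ℕ} (sch : ℕ → Fin n × Fin r) (t : ℕ) (p : Fin n) :
    (seqRun sch t).cnt p
      = (Finset.univ.filter
          (fun rm => (p : ℕ) + 1 ≤ (((seqRun sch t).rooms rm : ℕ)))).card := by
  induction t with
  | zero =>
    simp [seqRun]
  | succ t ih =>
    have hstep : seqRun sch (t+1) = seqStep (sch t) (seqRun sch t) := rfl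
    rw [hstep]
    unfold seqStep
    split
    · rename_i hc
      simp only
      by_cases hp : p = (sch t).1
      · subst hp
        rw [Function.update_self, ih]
        have hset : (Finset.univ.filter
              (fun rm => ((sch t).1 : ℕ) + 1 ≤
                ((Function.update (seqRun sch t).rooms (sch t).2 (Fin.succ (sch t).1) rm : ℕ))))
            = insert (sch t).2 (Finset.univ.filter
              (fun rm => ((sch t).1 : ℕ) + 1 ≤ (((seqRun sch t).rooms rm : ℕ)))) := by
          ext rm
          by_cases hrm : rm = (sch t).2
          · subst hrm
            simp [Function.update_self]
          · simp [Function.update_of_ne hrm, hrm]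
        rw [hset, Finset.card_insert_of_notMem]
        simp only [Finset.mem_filter, Finset.mem_univ, true_and, not_le, hc.1]
        simp
      · rw [Function.update_of_ne hp, ih]
        congr 1
        apply Finset.filter_congr
        intro rm _
        by_cases hrm : rm = (sch t).2
        · subst hrm
          rw [Function.update_self, hc.1]
          simp only [Fin.val_succ, Fin.coe_castSucc]
          have hpne : (p : ℕ) ≠ ((sch t).1 : ℕ) := fun h => hp (Fin.ext h)
          constructor <;> intro <;> omega
        · rw [Function.update_of_ne hrm]
    · exact ih

/-- in the sequential protocol, at any point of any execution a
room is in a configuration `≥ i+1` only if it has been visited by each of the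
prisoners `0, ..., i` (i.e., prisoners `1, ..., i+1` in 1-indexed terms); in
particular, once the last prisoner has performed his flip `(n-1) → n` a full
`r` times, every prisoner has visited every room. -/
theorem sequential_protocol_correct (n r : ℕ) (hn : 0 < n)
    (sch : ℕ → Fin n × Fin r) :
    (∀ (t : ℕ) (rm : Fin r) (i : Fin n),
        (i : ℕ) + 1 ≤ (((seqRun sch t).rooms rm : ℕ)) →
        ∃ t' < t, sch t' = (i, rm)) ∧
    (∀ t : ℕ, (seqRun sch t).cnt ⟨n - 1, Nat.sub_lt hn one_pos⟩ = r →
        ∀ (p : Fin n) (rm : Fin r), ∃ t' < t, sch t' = (p, rm)) := by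
  refine ⟨seq_part1 sch, ?_⟩
  intro t hcnt p rm
  set q : Fin n := ⟨n - 1, Nat.sub_lt hn one_pos⟩
  have hcard := (seq_cnt_eq sch t q).symm.trans hcnt
  have hfull : (Finset.univ.filter
      (fun rm => (q : ℕ) + 1 ≤ (((seqRun sch t).rooms rm : ℕ)))) = Finset.univ := by
    apply Finset.eq_univ_of_card
    rw [hcard]; simp
  have hrm : (q : ℕ) + 1 ≤ (((seqRun sch t).rooms rm : ℕ)) := by
    have := Finset.mem_univ rm
    rw [← hfull, Finset.mem_filter] at this
    exact this.2
  have hq : (p : ℕ) ≤ (q : ℕ) := by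
    have := p.isLt
    simp only [q]
    omega
  exact seq_part1 sch t rm p (by omega)
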